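/- In the TA-CQR setup with α/2 ∈ G, define the calibrated lengths L̃_TA(x) := (q̂_{1−α+τ̂(x)}(x) − q̂_{τ̂(x)}(x)) + 2Q^{TA} and L̃_sym(x) := (q̂_{1−α/2}(x) − q̂_{α/2}(x)) + 2Q^{std}, and the integrated core gap κ_ε := E_X[L_{α/2}(X) − L*_ε(X)]. Suppose for every x the map τ ↦ L_τ(x) is Lipschitz on [ε,α−ε] with constant M(x), M̄ := E[M(X)] < ∞, and e := sup_{x, γ∈Γ} |q̂_γ(x) − q_γ(x)| < ∞. Then E_X[L̃_TA(X) − L̃_sym(X)] ≤ −κ_ε + M̄Δ + 8e + 2|Q^{TA} − Q^{std}|. Consequently, along a sequence of such problems with κ_ε > 0 fixed, Δ = Δ_m → 0, e = o_p(1), and |Q^{TA} − Q^{std}| = o_p(1), the probability of the event E_X L̃_TA(X) < E_X L̃_sym(X) tends to one. -/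

import Mathlib

open MeasureTheory Set Filter ProbabilityTheory
open scoped ENNReal

noncomputable section

/-- The `k`-th smallest value among `v 0, …, v (m-1)` (for `1 ≤ k ≤ m`), characterized
as the infimum of the thresholds below which at least `k` of the values lie. -/
def kthSmallest (m : ℕ) (v : Fin m → ℝ) (k : ℕ) : ℝ :=
  sInf {t : ℝ | k ≤ (Finset.univ.filter fun i => v i ≤ t).card}

variable {𝒳 : Type*} [MeasurableSpace 𝒳]

/-- Conditional `τ`-th quantile of `Y` given `X = x`, for the conditional law `κ x`. -/
def cq (κ : Kernel 𝒳 ℝ) (τ : ℝ) (x : 𝒳) : ℝ :=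
  sInf {y : ℝ | τ ≤ ((κ x) (Iic y)).toReal}

/-- Conditional core length `L_τ(x) = q_{1-α+τ}(x) - q_τ(x)`. -/
def cL (κ : Kernel 𝒳 ℝ) (α τ : ℝ) (x : 𝒳) : ℝ :=
  cq κ (1 - α + τ) x - cq κ τ x

/-- Truncated conditional oracle length `L*_ε(x) = min_{τ ∈ [ε,α-ε]} L_τ(x)`. -/
def cLstar (κ : Kernel 𝒳 ℝ) (α ε : ℝ) (x : 𝒳) : ℝ :=
  sInf ((fun τ => cL κ α τ x) '' Icc ε (α - ε))

/-- Estimated allocation: the least minimizer over the grid `G` of the fitted core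
length `q̂_{1-α+τ}(x) - q̂_τ(x)`. -/
def tauhat (α : ℝ) (G : Finset ℝ) (qhat : ℝ → 𝒳 → ℝ) (x : 𝒳) : ℝ :=
  sInf {τ : ℝ | τ ∈ G ∧ ∀ σ ∈ G,
    qhat (1 - α + τ) x - qhat τ x ≤ qhat (1 - α + σ) x - qhat σ x}

/-- TA-CQR conformity score at `(x,y)`: `max{q̂_{τ̂(x)}(x) - y, y - q̂_{1-α+τ̂(x)}(x), 0}`. -/
def taScore (α : ℝ) (G : Finset ℝ) (qhat : ℝ → 𝒳 → ℝ) (p : 𝒳 × ℝ) : ℝ :=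
  max (max (qhat (tauhat α G qhat p.1) p.1 - p.2)
           (p.2 - qhat (1 - α + tauhat α G qhat p.1) p.1)) 0

/-- Fitted core length at grid level `g`. -/
def Fq {𝒳 : Type*} (α : ℝ) (qhat : ℝ → 𝒳 → ℝ) (g : ℝ) (x : 𝒳) : ℝ :=
  qhat (1 - α + g) x - qhat g x

theorem meas_inf'' {δ : Type*} [MeasurableSpace δ] (G : Finset ℝ) (hG : G.Nonempty) (f : ℝ → δ → ℝ)
    (hf : ∀ g, Measurable (f g)) : Measurable fun x => G.inf' hG fun g => f g x := by
  induction hG using Finset.Nonempty.cons_induction with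
  | singleton a => simpa using hf a
  | cons a s h hs ih =>
    have : (fun x => (Finset.cons a s h).inf' (Finset.cons_nonempty h) fun g => f g x)
        = fun x => min (f a x) (s.inf' hs fun g => f g x) := by
      funext x; rw [Finset.inf'_cons]
    rw [this]
    exact (hf a).min ih

theorem tauhat_spec {𝒳 : Type*} [MeasurableSpace 𝒳] (α : ℝ) (G : Finset ℝ) (hG : G.Nonempty)
    (qhat : ℝ → 𝒳 → ℝ) (x : 𝒳) :
    tauhat α G qhat x ∈ G ∧
    ∀ σ ∈ G, Fq α qhat (tauhat α G qhat x) x ≤ Fq α qhat σ x := by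
  have hne : {τ : ℝ | τ ∈ G ∧ ∀ σ ∈ G,
      qhat (1 - α + τ) x - qhat τ x ≤ qhat (1 - α + σ) x - qhat σ x}.Nonempty := by
    obtain ⟨g, hg, hmin⟩ := G.exists_min_image (fun g => qhat (1 - α + g) x - qhat g x) hG
    exact ⟨g, hg, hmin⟩
  have hfin : {τ : ℝ | τ ∈ G ∧ ∀ σ ∈ G,
      qhat (1 - α + τ) x - qhat τ x ≤ qhat (1 - α + σ) x - qhat σ x}.Finite :=
    G.finite_toSet.subset fun τ hτ => hτ.1
  exact hne.csInf_mem hfin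

/-- Key per-problem lemma. -/
theorem key_bound {𝒳 : Type*} [MeasurableSpace 𝒳] (α ε : ℝ)
    (hε : ε ∈ Ioo (0:ℝ) (α / 2))
    (PX : Measure 𝒳) [IsProbabilityMeasure PX] (κ : Kernel 𝒳 ℝ)
    (hL2int : Integrable (fun x => cL κ α (α / 2) x) PX)
    (hLsint : Integrable (fun x => cLstar κ α ε x) PX)
    (M : 𝒳 → ℝ) (hMint : Integrable M PX)
    (hLip : ∀ x, ∀ s ∈ Icc ε (α - ε), ∀ t ∈ Icc ε (α - ε),
      |cL κ α s x - cL κ α t x| ≤ M x * |s - t|)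
    (G : Finset ℝ) (hGne : G.Nonempty) (hGsub : ↑G ⊆ Icc ε (α - ε)) (hG2 : α / 2 ∈ G)
    (Δe : ℝ) (hmesh : ∀ τ ∈ Icc ε (α - ε), ∃ g ∈ G, |τ - g| ≤ Δe)
    (qhat : ℝ → 𝒳 → ℝ) (hqm : ∀ γ, Measurable fun x => qhat γ x)
    (E : ℝ) (hE : ∀ x, ∀ γ ∈ G ∪ G.image (fun g => 1 - α + g), |qhat γ x - cq κ γ x| ≤ E) :
    0 ≤ E ∧
    Integrable (fun x => Fq α qhat (tauhat α G qhat x) x) PX ∧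
    Integrable (fun x => Fq α qhat (α / 2) x) PX ∧
    (∫ x, (Fq α qhat (tauhat α G qhat x) x - Fq α qhat (α / 2) x) ∂PX)
      ≤ (∫ x, (cLstar κ α ε x - cL κ α (α / 2) x) ∂PX) + (∫ x, M x ∂PX) * Δe + 4 * E := by
  obtain ⟨hε0, hεα2⟩ := hε
  have hεle : ε < α - ε := by linarith
  have hhalf : α / 2 ∈ Icc ε (α - ε) := ⟨le_of_lt hεα2, by linarith⟩
  have hX : Nonempty 𝒳 := by
    by_contra h
    rw [not_nonempty_iff] at h
    have h1 : PX univ = 1 := measure_univ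
    rw [Set.univ_eq_empty_iff.mpr h, measure_empty] at h1
    exact zero_ne_one h1
  obtain ⟨x0⟩ := hX
  have hE0 : 0 ≤ E :=
    le_trans (abs_nonneg _) (hE x0 (α / 2) (Finset.mem_union_left _ hG2))
  have hM0 : ∀ x, 0 ≤ M x := by
    intro x
    have h1 := hLip x ε ⟨le_rfl, hεle.le⟩ (α - ε) ⟨hεle.le, le_rfl⟩
    have h2 : 0 < |ε - (α - ε)| := abs_pos.2 (by linarith)
    nlinarith [abs_nonneg (cL κ α ε x - cL κ α (α - ε) x)]
  have herr : ∀ x, ∀ g ∈ G, |Fq α qhat g x - cL κ α g x| ≤ 2 * E := by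
    intro x g hg
    have h1 := hE x g (Finset.mem_union_left _ hg)
    have h2 := hE x (1 - α + g) (Finset.mem_union_right _ (Finset.mem_image_of_mem _ hg))
    have h3 : Fq α qhat g x - cL κ α g x
        = (qhat (1 - α + g) x - cq κ (1 - α + g) x) - (qhat g x - cq κ g x) := by
      simp only [Fq, cL]; ring
    rw [h3]
    calc |(qhat (1 - α + g) x - cq κ (1 - α + g) x) - (qhat g x - cq κ g x)|
        ≤ |qhat (1 - α + g) x - cq κ (1 - α + g) x| + |qhat g x - cq κ g x| := abs_sub _ _
      _ ≤ 2 * E := by linarith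
  have hstar : ∀ x, ∃ τs ∈ Icc ε (α - ε), cLstar κ α ε x = cL κ α τs x ∧
      ∀ τ ∈ Icc ε (α - ε), cL κ α τs x ≤ cL κ α τ x := by
    intro x
    have hcont : ContinuousOn (fun τ => cL κ α τ x) (Icc ε (α - ε)) := by
      refine LipschitzOnWith.continuousOn (K := (M x).toNNReal) ?_
      rw [lipschitzOnWith_iff_dist_le_mul]
      intro s hs t ht
      rw [Real.dist_eq, Real.dist_eq, Real.coe_toNNReal _ (hM0 x)]
      exact hLip x s hs t ht
    obtain ⟨τs, hτs, hmin⟩ := isCompact_Icc.exists_isMinOn ⟨α / 2, hhalf⟩ hcont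
    refine ⟨τs, hτs, ?_, fun τ hτ => hmin hτ⟩
    show sInf ((fun τ => cL κ α τ x) '' Icc ε (α - ε)) = cL κ α τs x
    refine IsLeast.csInf_eq ⟨mem_image_of_mem _ hτs, ?_⟩
    rintro y ⟨τ, hτ, rfl⟩
    exact hmin hτ
  have hub : ∀ x, Fq α qhat (tauhat α G qhat x) x ≤ cLstar κ α ε x + M x * Δe + 2 * E := by
    intro x
    obtain ⟨hTG, hTmin⟩ := tauhat_spec α G hGne qhat x
    obtain ⟨τs, hτs, hval, hmin⟩ := hstar x
    obtain ⟨g, hg, hgd⟩ := hmesh τs hτs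
    have h1 : Fq α qhat (tauhat α G qhat x) x ≤ Fq α qhat g x := hTmin g hg
    have h2 : Fq α qhat g x ≤ cL κ α g x + 2 * E := by
      have h := herr x g hg; rw [abs_le] at h; linarith [h.1, h.2]
    have h3 : cL κ α g x ≤ cL κ α τs x + M x * Δe := by
      have h4 := hLip x g (hGsub hg) τs hτs
      have h5 : |g - τs| ≤ Δe := by rw [abs_sub_comm]; exact hgd
      have h6 : M x * |g - τs| ≤ M x * Δe := mul_le_mul_of_nonneg_left h5 (hM0 x)
      have h7 := (abs_le.1 h4).2
      linarith
    rw [hval]; linarith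
  have hub0 : ∀ x, Fq α qhat (tauhat α G qhat x) x ≤ Fq α qhat (α / 2) x := fun x =>
    (tauhat_spec α G hGne qhat x).2 (α / 2) hG2
  have hlb : ∀ x, cLstar κ α ε x - 2 * E ≤ Fq α qhat (tauhat α G qhat x) x := by
    intro x
    obtain ⟨hTG, _⟩ := tauhat_spec α G hGne qhat x
    obtain ⟨τs, hτs, hval, hmin⟩ := hstar x
    have h1 : cLstar κ α ε x ≤ cL κ α (tauhat α G qhat x) x := by
      rw [hval]; exact hmin _ (hGsub hTG)
    have h2 := herr x _ hTG
    rw [abs_le] at h2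
    linarith [h2.1, h2.2]
  have hsym : ∀ x, |Fq α qhat (α / 2) x - cL κ α (α / 2) x| ≤ 2 * E := fun x => herr x _ hG2
  have hFmeas : ∀ g, Measurable fun x => Fq α qhat g x := fun g => (hqm _).sub (hqm _)
  have hrep : (fun x => Fq α qhat (tauhat α G qhat x) x)
      = fun x => G.inf' hGne fun g => Fq α qhat g x := by
    funext x
    obtain ⟨hTG, hTmin⟩ := tauhat_spec α G hGne qhat x
    exact le_antisymm (Finset.le_inf' hGne _ fun g hg => hTmin g hg) (Finset.inf'_le _ hTG)
  have hTmeas : Measurable fun x => Fq α qhat (tauhat α G qhat x) x := by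
    rw [hrep]; exact meas_inf'' G hGne _ hFmeas
  have Int2 : Integrable (fun x => Fq α qhat (α / 2) x) PX := by
    refine Integrable.mono' (g := fun x => |cL κ α (α / 2) x| + 2 * E)
      (hL2int.abs.add (integrable_const _)) (hFmeas _).aestronglyMeasurable ?_
    filter_upwards with x
    have h := hsym x
    rw [Real.norm_eq_abs]
    calc |Fq α qhat (α / 2) x|
        = |cL κ α (α / 2) x + (Fq α qhat (α / 2) x - cL κ α (α / 2) x)| := by ring_nf
      _ ≤ |cL κ α (α / 2) x| + |Fq α qhat (α / 2) x - cL κ α (α / 2) x| := abs_add_le _ _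
      _ ≤ |cL κ α (α / 2) x| + 2 * E := by linarith
  have IntT : Integrable (fun x => Fq α qhat (tauhat α G qhat x) x) PX := by
    refine Integrable.mono'
      (g := fun x => |cLstar κ α ε x| + (|cL κ α (α / 2) x| + 4 * E))
      (hLsint.abs.add (hL2int.abs.add (integrable_const _)))
      hTmeas.aestronglyMeasurable ?_
    filter_upwards with x
    rw [Real.norm_eq_abs, abs_le]
    constructor
    · have h1 := hlb x
      have h2 := neg_abs_le (cLstar κ α ε x)
      have h3 := abs_nonneg (cL κ α (α / 2) x)
      linarith
    · have h1 := hub0 x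
      have h2 := (abs_le.1 (hsym x)).2
      have h3 := le_abs_self (cL κ α (α / 2) x)
      have h4 := abs_nonneg (cLstar κ α ε x)
      linarith
  refine ⟨hE0, IntT, Int2, ?_⟩
  have hptw : ∀ x, Fq α qhat (tauhat α G qhat x) x - Fq α qhat (α / 2) x
      ≤ (cLstar κ α ε x - cL κ α (α / 2) x) + M x * Δe + 4 * E := by
    intro x
    have h1 := hub x
    have h2 := (abs_le.1 (hsym x)).1
    linarith
  have hInt3 : Integrable
      (fun x => (cLstar κ α ε x - cL κ α (α / 2) x) + M x * Δe + 4 * E) PX :=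
    ((hLsint.sub hL2int).add (hMint.mul_const Δe)).add (integrable_const _)
  have hmono := integral_mono (IntT.sub Int2) hInt3 hptw
  have i1 : Integrable (fun x => cLstar κ α ε x - cL κ α (α / 2) x) PX := hLsint.sub hL2int
  have i2 : Integrable (fun x => M x * Δe) PX := hMint.mul_const Δe
  have i12 : Integrable (fun x => (cLstar κ α ε x - cL κ α (α / 2) x) + M x * Δe) PX := i1.add i2
  have heq : ∫ x, ((cLstar κ α ε x - cL κ α (α / 2) x) + M x * Δe + 4 * E) ∂PX
      = (∫ x, (cLstar κ α ε x - cL κ α (α / 2) x) ∂PX) + (∫ x, M x ∂PX) * Δe + 4 * E := by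
    rw [integral_add i12 (integrable_const _), integral_add i1 i2,
        integral_mul_const, integral_const]
    simp [measure_univ]
  rw [heq] at hmono
  exact hmono

/-- transfer of an integrated core advantage through calibration.
With `α/2` in the grid, the calibrated TA and equal-tailed lengths satisfy
`E_X[L̃_TA - L̃_sym] ≤ -κ_ε + M̄Δ + 8e + 2|Q^TA - Q^std|`; consequently, along a
sequence of problems with fixed `κ_ε > 0`, `Δ_n → 0`, `e_n →ᵖ 0` and
`|Q^TA - Q^std| →ᵖ 0`, the probability that `E_X L̃_TA < E_X L̃_sym` tends to one. -/
theorem stmt17 (α ε : ℝ) (hα : α ∈ Ioo (0:ℝ) 1) (hε : ε ∈ Ioo (0:ℝ) (α / 2))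
    (PX : Measure 𝒳) [IsProbabilityMeasure PX]
    (κ : Kernel 𝒳 ℝ) [IsMarkovKernel κ]
    -- integrability of the symmetric core length and the truncated oracle length
    (hL2int : Integrable (fun x => cL κ α (α / 2) x) PX)
    (hLsint : Integrable (fun x => cLstar κ α ε x) PX)
    -- integrated core gap
    (κε : ℝ) (hκε : κε = ∫ x, (cL κ α (α / 2) x - cLstar κ α ε x) ∂PX)
    (hκpos : 0 < κε)
    -- Lipschitz core length with integrable constant
    (M : 𝒳 → ℝ) (hMint : Integrable M PX)
    (hLip : ∀ x, ∀ s ∈ Icc ε (α - ε), ∀ t ∈ Icc ε (α - ε),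
      |cL κ α s x - cL κ α t x| ≤ M x * |s - t|)
    -- sequence of grids with vanishing mesh, each containing α/2
    (G : ℕ → Finset ℝ) (hGne : ∀ n, (G n).Nonempty)
    (hGsub : ∀ n, ↑(G n) ⊆ Icc ε (α - ε)) (hG2 : ∀ n, α / 2 ∈ G n)
    (Δ : ℕ → ℝ) (hmesh : ∀ n, ∀ τ ∈ Icc ε (α - ε), ∃ g ∈ G n, |τ - g| ≤ Δ n)
    (hΔ0 : Tendsto Δ atTop (nhds 0))
    -- training-dependent fitted quantile maps, monotone on the endpoint levels
    {Ω : Type*} [MeasurableSpace Ω] (P : Measure Ω) [IsProbabilityMeasure P]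
    (qh : ℕ → Ω → ℝ → 𝒳 → ℝ)
    (hqm : ∀ n ω γ, Measurable fun x => qh n ω γ x)
    (hmono : ∀ n ω x, ∀ γ₁ ∈ (G n) ∪ (G n).image (fun g => 1 - α + g),
      ∀ γ₂ ∈ (G n) ∪ (G n).image (fun g => 1 - α + g),
      γ₁ ≤ γ₂ → qh n ω γ₁ x ≤ qh n ω γ₂ x)
    -- finite-grid endpoint errors, vanishing in probability
    (e : ℕ → Ω → ℝ)
    (hebound : ∀ n ω x, ∀ γ ∈ (G n) ∪ (G n).image (fun g => 1 - α + g),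
      |qh n ω γ x - cq κ γ x| ≤ e n ω)
    (hep : ∀ δ : ℝ, 0 < δ → Tendsto (fun n => P {ω | δ < e n ω}) atTop (nhds 0))
    -- split-conformal calibration radii, with vanishing difference in probability
    (Qta Qstd : ℕ → Ω → ℝ) (hQnn : ∀ n ω, 0 ≤ Qta n ω ∧ 0 ≤ Qstd n ω)
    (hQp : ∀ δ : ℝ, 0 < δ →
      Tendsto (fun n => P {ω | δ < |Qta n ω - Qstd n ω|}) atTop (nhds 0)) :
    (∀ n ω,
      (∫ x, ((qh n ω (1 - α + tauhat α (G n) (qh n ω) x) x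
                - qh n ω (tauhat α (G n) (qh n ω) x) x + 2 * Qta n ω)
             - (qh n ω (1 - α / 2) x - qh n ω (α / 2) x + 2 * Qstd n ω)) ∂PX)
        ≤ -κε + (∫ x, M x ∂PX) * Δ n + 8 * e n ω
            + 2 * |Qta n ω - Qstd n ω|) ∧
    Tendsto (fun n => P {ω |
        (∫ x, (qh n ω (1 - α + tauhat α (G n) (qh n ω) x) x
            - qh n ω (tauhat α (G n) (qh n ω) x) x + 2 * Qta n ω) ∂PX)
        < ∫ x, (qh n ω (1 - α / 2) x - qh n ω (α / 2) x + 2 * Qstd n ω) ∂PX})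
      atTop (nhds 1) := by
  classical
  have h12 : (1 : ℝ) - α + α / 2 = 1 - α / 2 := by ring
  -- per-(n,ω) facts
  have hkey := fun n ω => key_bound α ε hε PX κ hL2int hLsint M hMint hLip
    (G n) (hGne n) (hGsub n) (hG2 n) (Δ n) (hmesh n) (qh n ω) (hqm n ω)
    (e n ω) (hebound n ω)
  have hneg : ∫ x, (cLstar κ α ε x - cL κ α (α / 2) x) ∂PX = -κε := by
    have h : (fun x => cLstar κ α ε x - cL κ α (α / 2) x)
        = fun x => -(cL κ α (α / 2) x - cLstar κ α ε x) := by funext x; ring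
    rw [h, integral_neg, ← hκε]
  -- the two integral identities
  have eqTA : ∀ n ω, (∫ x, (qh n ω (1 - α + tauhat α (G n) (qh n ω) x) x
        - qh n ω (tauhat α (G n) (qh n ω) x) x + 2 * Qta n ω) ∂PX)
      = (∫ x, Fq α (qh n ω) (tauhat α (G n) (qh n ω) x) x ∂PX) + 2 * Qta n ω := by
    intro n ω
    obtain ⟨-, IntT, -, -⟩ := hkey n ω
    have h : (fun x => qh n ω (1 - α + tauhat α (G n) (qh n ω) x) x
          - qh n ω (tauhat α (G n) (qh n ω) x) x + 2 * Qta n ω)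
        = fun x => Fq α (qh n ω) (tauhat α (G n) (qh n ω) x) x + 2 * Qta n ω := rfl
    rw [h, integral_add IntT (integrable_const _), integral_const]
    simp [measure_univ]
  have eqS : ∀ n ω, (∫ x, (qh n ω (1 - α / 2) x - qh n ω (α / 2) x + 2 * Qstd n ω) ∂PX)
      = (∫ x, Fq α (qh n ω) (α / 2) x ∂PX) + 2 * Qstd n ω := by
    intro n ω
    obtain ⟨-, -, Int2, -⟩ := hkey n ω
    have h : (fun x => qh n ω (1 - α / 2) x - qh n ω (α / 2) x + 2 * Qstd n ω)
        = fun x => Fq α (qh n ω) (α / 2) x + 2 * Qstd n ω := by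
      funext x; simp only [Fq, h12]
    rw [h, integral_add Int2 (integrable_const _), integral_const]
    simp [measure_univ]
  -- difference bound, in split form
  have hdiff : ∀ n ω,
      ((∫ x, Fq α (qh n ω) (tauhat α (G n) (qh n ω) x) x ∂PX) + 2 * Qta n ω)
        - ((∫ x, Fq α (qh n ω) (α / 2) x ∂PX) + 2 * Qstd n ω)
      ≤ -κε + (∫ x, M x ∂PX) * Δ n + 8 * e n ω + 2 * |Qta n ω - Qstd n ω| := by
    intro n ω
    obtain ⟨hE0, IntT, Int2, hbound⟩ := hkey n ω
    rw [integral_sub IntT Int2, hneg] at hbound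
    have h1 : Qta n ω - Qstd n ω ≤ |Qta n ω - Qstd n ω| := le_abs_self _
    linarith
  constructor
  · intro n ω
    obtain ⟨hE0, IntT, Int2, hbound⟩ := hkey n ω
    have h : (fun x => (qh n ω (1 - α + tauhat α (G n) (qh n ω) x) x
          - qh n ω (tauhat α (G n) (qh n ω) x) x + 2 * Qta n ω)
          - (qh n ω (1 - α / 2) x - qh n ω (α / 2) x + 2 * Qstd n ω))
        = fun x => (Fq α (qh n ω) (tauhat α (G n) (qh n ω) x) x
            - Fq α (qh n ω) (α / 2) x) + (2 * Qta n ω - 2 * Qstd n ω) := by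
      funext x; simp only [Fq, h12]; ring
    have Isub : Integrable (fun x => Fq α (qh n ω) (tauhat α (G n) (qh n ω) x) x
        - Fq α (qh n ω) (α / 2) x) PX := IntT.sub Int2
    rw [h, integral_add Isub (integrable_const _), integral_const]
    simp only [measure_univ, probReal_univ, ENNReal.toReal_one, smul_eq_mul, one_mul]
    rw [hneg] at hbound
    have h1 : Qta n ω - Qstd n ω ≤ |Qta n ω - Qstd n ω| := le_abs_self _
    linarith
  · -- convergence part
    have hMΔ : Tendsto (fun n => (∫ x, M x ∂PX) * Δ n) atTop (nhds 0) := by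
      simpa using hΔ0.const_mul (∫ x, M x ∂PX)
    have hev : ∀ᶠ n in atTop, (∫ x, M x ∂PX) * Δ n < κε / 3 :=
      Filter.Tendsto.eventually_lt_const (by positivity) hMΔ
    have ha := hep (κε / 24) (by positivity)
    have hb := hQp (κε / 12) (by positivity)
    set A : ℕ → Set Ω := fun n => {ω |
        (∫ x, (qh n ω (1 - α + tauhat α (G n) (qh n ω) x) x
            - qh n ω (tauhat α (G n) (qh n ω) x) x + 2 * Qta n ω) ∂PX)
        < ∫ x, (qh n ω (1 - α / 2) x - qh n ω (α / 2) x + 2 * Qstd n ω) ∂PX} with hA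
    have hlow : ∀ᶠ n in atTop,
        1 - (P {ω | κε / 24 < e n ω} + P {ω | κε / 12 < |Qta n ω - Qstd n ω|}) ≤ P (A n) := by
      filter_upwards [hev] with n hn
      have hsubset : (A n)ᶜ ⊆ {ω | κε / 24 < e n ω} ∪ {ω | κε / 12 < |Qta n ω - Qstd n ω|} := by
        intro ω hω
        by_contra hc
        rw [Set.mem_union, not_or] at hc
        have he1 : e n ω ≤ κε / 24 := le_of_not_gt hc.1
        have he2 : |Qta n ω - Qstd n ω| ≤ κε / 12 := le_of_not_gt hc.2
        apply hω
        show ω ∈ A n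
        rw [hA]
        simp only [Set.mem_setOf_eq]
        rw [eqTA n ω, eqS n ω]
        have hd := hdiff n ω
        have hE0 := (hkey n ω).1
        nlinarith [hκpos]
      have h1 : (1 : ℝ≥0∞) ≤ P (A n)
          + (P {ω | κε / 24 < e n ω} + P {ω | κε / 12 < |Qta n ω - Qstd n ω|}) := by
        calc (1 : ℝ≥0∞) = P univ := (measure_univ).symm
          _ = P (A n ∪ (A n)ᶜ) := by rw [Set.union_compl_self]
          _ ≤ P (A n) + P ((A n)ᶜ) := measure_union_le _ _
          _ ≤ P (A n) + (P {ω | κε / 24 < e n ω}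
              + P {ω | κε / 12 < |Qta n ω - Qstd n ω|}) := by
            gcongr
            exact le_trans (measure_mono hsubset) (measure_union_le _ _)
      exact tsub_le_iff_right.mpr h1
    have hhigh : ∀ᶠ n in atTop, P (A n) ≤ 1 := Filter.Eventually.of_forall fun n => prob_le_one
    have hlowt : Tendsto (fun n =>
        (1 : ℝ≥0∞) - (P {ω | κε / 24 < e n ω} + P {ω | κε / 12 < |Qta n ω - Qstd n ω|}))
        atTop (nhds 1) := by
      have := ENNReal.Tendsto.sub (tendsto_const_nhds (x := (1 : ℝ≥0∞)) (f := atTop))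
        (ha.add hb) (Or.inl ENNReal.one_ne_top)
      simpa using this
    exact tendsto_of_tendsto_of_tendsto_of_le_of_le' hlowt tendsto_const_nhds hlow hhigh


end
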